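/- Let Λ > 0, K ≥ 1, u₁ > 0, and set α := (1/2)√(ΛK/3), r_c⁺ := √(3K/Λ) = K/(2α). Let r : [0,u₁] → ℝ be differentiable with −(1/2)(K − (Λ/3) r(u)²) ≤ r'(u) ≤ −(1/2)(1 − (ΛK/3) r(u)²) for all u ∈ [0,u₁], and suppose r(u₁) =: r₁ > r_c⁺. Define c⁻ := u₁ + (1/α)·arcoth(2α r₁) and c⁺ := u₁ + (1/α)·arcoth(2α r₁/K). Then for every u ∈ [0,u₁], (1/(2α))·coth(α(c⁻ − u)) ≤ r(u) ≤ (K/(2α))·coth(α(c⁺ − u)). -/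

import Mathlib

noncomputable section

open Real Set

/-- Hyperbolic cotangent: `coth x = cosh x / sinh x`. -/
def coth (x : ℝ) : ℝ := Real.cosh x / Real.sinh x

/-- Inverse hyperbolic cotangent on `(1,∞)`: `arcoth y = (1/2)·log((y+1)/(y−1))`. -/
def arcoth (y : ℝ) : ℝ := (1 / 2) * Real.log ((y + 1) / (y - 1))

/-!
The two coth profiles `P(u) = k/(2α) · coth(α(c - u))` (with `k = 1` and `k = K`) solve the
extreme comparison equations `P' = -(1/2)(k - μ P²)` exactly, and the constants `c⁻`, `c⁺` are
chosen so that `P(u₁) = r(u₁)`. The difference `h` of `r` and such a profile then satisfies the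
linear differential inequality `h' ≤ q h` with continuous `q = (μ/2)(r + P)`, and a backward
Grönwall argument from `h(u₁) = 0` keeps `h ≥ 0` on `[0, u₁]`.
-/

lemma coth_eq_inv_tanh (x : ℝ) : coth x = (tanh x)⁻¹ := by
  rw [coth, tanh_eq_sinh_div_cosh, inv_div]

lemma arcoth_eq_artanh_inv {y : ℝ} (hy : 1 < y) : arcoth y = artanh y⁻¹ := by
  have hy' : y⁻¹ < 1 := inv_lt_one_of_one_lt₀ hy
  have hy0 : 0 < y⁻¹ := by positivity
  rw [arcoth, artanh_eq_half_log ⟨by linarith, hy'.le⟩]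
  congr 2
  field_simp

lemma coth_arcoth {y : ℝ} (hy : 1 < y) : coth (arcoth y) = y := by
  rw [arcoth_eq_artanh_inv hy, coth_eq_inv_tanh,
    tanh_artanh ⟨by linarith [inv_pos.2 (zero_lt_one.trans hy)], inv_lt_one_of_one_lt₀ hy⟩,
    inv_inv]

lemma arcoth_pos {y : ℝ} (hy : 1 < y) : 0 < arcoth y := by
  rw [arcoth_eq_artanh_inv hy]
  exact artanh_pos ⟨inv_pos.2 (zero_lt_one.trans hy), inv_lt_one_of_one_lt₀ hy⟩

lemma hasDerivAt_coth {t : ℝ} (ht : sinh t ≠ 0) : HasDerivAt coth (1 - coth t ^ 2) t := by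
  refine ((hasDerivAt_cosh t).div (hasDerivAt_sinh t) ht).congr_deriv ?_
  rw [coth]
  field_simp

lemma image_nonpos_of_deriv_right_le_mul_of_pos {f f' : ℝ → ℝ} {a b L : ℝ}
    (hf : ContinuousOn f (Icc a b)) (hf' : ∀ x ∈ Ico a b, HasDerivWithinAt f (f' x) (Ici x) x)
    (ha : f a ≤ 0) (bound : ∀ x ∈ Ico a b, 0 < f x → f' x ≤ L * f x) :
    ∀ ⦃x⦄, x ∈ Icc a b → f x ≤ 0 := by
  intro x hx
  -- `ε e^{(L+1)(x-a)}` is a strict supersolution wherever `f` touches it.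
  have barrier : ∀ ε > 0, f x ≤ ε * exp ((L + 1) * (x - a)) := by
    intro ε hε
    refine image_le_of_deriv_right_lt_deriv_boundary (B := fun x ↦ ε * exp ((L + 1) * (x - a)))
      (B' := fun x ↦ (L + 1) * (ε * exp ((L + 1) * (x - a)))) hf hf'
      (by simpa using ha.trans hε.le) (fun y ↦ ?_) (fun y hy hfy ↦ ?_) hx
    · exact ((((hasDerivAt_id' y).sub_const a).const_mul (L + 1)).exp.const_mul ε).congr_deriv
        (by ring)
    · have hB : 0 < ε * exp ((L + 1) * (y - a)) := by positivity
      calc f' y ≤ L * f y := bound y hy (hfy ▸ hB)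
        _ < (L + 1) * (ε * exp ((L + 1) * (y - a))) := by rw [hfy]; linarith
  by_contra! hpos
  have hE : 0 < exp ((L + 1) * (x - a)) := exp_pos _
  have := barrier (f x / (2 * exp ((L + 1) * (x - a)))) (by positivity)
  rw [div_mul_eq_mul_div, mul_div_mul_right _ _ hE.ne'] at this
  linarith

lemma image_nonneg_of_deriv_le_mul_of_right_nonneg {h h' q : ℝ → ℝ} {a b : ℝ}
    (hd : ∀ u ∈ Icc a b, HasDerivWithinAt h (h' u) (Icc a b) u) (hq : ContinuousOn q (Icc a b))
    (bound : ∀ u ∈ Icc a b, h' u ≤ q u * h u) (hb : 0 ≤ h b) :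
    ∀ u ∈ Icc a b, 0 ≤ h u := by
  -- After the reflection `s ↦ b - s`, `-h` obeys the forward inequality with `L = -inf q`.
  obtain ⟨m, hm⟩ := isCompact_Icc.bddBelow_image hq
  have hrefl : MapsTo (fun s ↦ b - s) (Icc 0 (b - a)) (Icc a b) :=
    fun s hs ↦ ⟨by linarith [hs.2], by linarith [hs.1]⟩
  have hf' : ∀ s ∈ Icc 0 (b - a),
      HasDerivWithinAt (fun s ↦ -h (b - s)) (h' (b - s)) (Icc 0 (b - a)) s := fun s hs ↦
    (((hd _ (hrefl hs)).comp s ((hasDerivAt_id' s).const_sub b).hasDerivWithinAt hrefl).neg)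
      |>.congr_deriv (by ring)
  have key := image_nonpos_of_deriv_right_le_mul_of_pos (L := -m)
    (fun s hs ↦ (hf' s hs).continuousWithinAt)
    (fun s hs ↦ (hf' s (Ico_subset_Icc_self hs)).mono_of_mem_nhdsWithin
      (Icc_mem_nhdsGE_of_mem hs)) (by simpa using hb) (fun s hs _ ↦ ?_)
  · intro u hu
    simpa using key (x := b - u) ⟨by linarith [hu.2], by linarith [hu.1]⟩
  · have hu := hrefl (Ico_subset_Icc_self hs)
    have hmq : m ≤ q (b - s) := hm (mem_image_of_mem q hu)
    have hneg : h (b - s) < 0 := by linarith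
    nlinarith [bound _ hu]

lemma le_of_deriv_le_riccati {a b k μ : ℝ} {r r' P : ℝ → ℝ}
    (hr : ∀ u ∈ Icc a b, HasDerivWithinAt r (r' u) (Icc a b) u)
    (hP : ∀ u ∈ Icc a b, HasDerivWithinAt P (-(1 / 2) * (k - μ * P u ^ 2)) (Icc a b) u)
    (hr' : ∀ u ∈ Icc a b, r' u ≤ -(1 / 2) * (k - μ * r u ^ 2)) (hb : P b ≤ r b) :
    ∀ u ∈ Icc a b, P u ≤ r u := by
  have hq : ContinuousOn (fun u ↦ μ / 2 * (r u + P u)) (Icc a b) :=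
    continuousOn_const.mul (ContinuousOn.add (fun u hu ↦ (hr u hu).continuousWithinAt)
      fun u hu ↦ (hP u hu).continuousWithinAt)
  have := image_nonneg_of_deriv_le_mul_of_right_nonneg (h := fun u ↦ r u - P u)
    (fun u hu ↦ (hr u hu).sub (hP u hu)) hq (fun u hu ↦ by linear_combination hr' u hu)
    (sub_nonneg.2 hb)
  exact fun u hu ↦ sub_nonneg.1 (this u hu)

lemma le_of_le_deriv_riccati {a b k μ : ℝ} {r r' P : ℝ → ℝ}
    (hr : ∀ u ∈ Icc a b, HasDerivWithinAt r (r' u) (Icc a b) u)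
    (hP : ∀ u ∈ Icc a b, HasDerivWithinAt P (-(1 / 2) * (k - μ * P u ^ 2)) (Icc a b) u)
    (hr' : ∀ u ∈ Icc a b, -(1 / 2) * (k - μ * r u ^ 2) ≤ r' u) (hb : r b ≤ P b) :
    ∀ u ∈ Icc a b, r u ≤ P u := by
  have hq : ContinuousOn (fun u ↦ μ / 2 * (P u + r u)) (Icc a b) :=
    continuousOn_const.mul (ContinuousOn.add (fun u hu ↦ (hP u hu).continuousWithinAt)
      fun u hu ↦ (hr u hu).continuousWithinAt)
  have := image_nonneg_of_deriv_le_mul_of_right_nonneg (h := fun u ↦ P u - r u)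
    (fun u hu ↦ (hP u hu).sub (hr u hu)) hq (fun u hu ↦ by linear_combination hr' u hu)
    (sub_nonneg.2 hb)
  exact fun u hu ↦ sub_nonneg.1 (this u hu)

def cothProfile (k α c u : ℝ) : ℝ := k / (2 * α) * coth (α * (c - u))

lemma hasDerivAt_cothProfile {k α μ c u : ℝ} (hk : k ≠ 0) (hα : α ≠ 0)
    (hμ : 4 * α ^ 2 = k * μ) (hu : α * (c - u) ≠ 0) :
    HasDerivAt (cothProfile k α c) (-(1 / 2) * (k - μ * cothProfile k α c u ^ 2)) u := by
  have hs : sinh (α * (c - u)) ≠ 0 := sinh_ne_zero.2 hu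
  refine (((hasDerivAt_coth hs).comp u (((hasDerivAt_id' u).const_sub c).const_mul α)).const_mul
    (k / (2 * α))).congr_deriv ?_
  unfold cothProfile
  field_simp
  linear_combination coth (α * (c - u)) ^ 2 * hμ

lemma cothProfile_anchored_arg_pos {α y u u₁ : ℝ} (hα : 0 < α) (hy : 1 < y) (hu : u ≤ u₁) :
    0 < α * (u₁ + 1 / α * arcoth y - u) := by
  have : α * (u₁ + 1 / α * arcoth y - u) = arcoth y + α * (u₁ - u) := by
    field_simp
    ring
  rw [this]
  exact add_pos_of_pos_of_nonneg (arcoth_pos hy) (mul_nonneg hα.le (sub_nonneg.2 hu))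

lemma cothProfile_anchored_self {k α r₁ u₁ : ℝ} (hk : k ≠ 0) (hα : α ≠ 0)
    (hy : 1 < 2 * α * r₁ / k) :
    cothProfile k α (u₁ + 1 / α * arcoth (2 * α * r₁ / k)) u₁ = r₁ := by
  have : α * (u₁ + 1 / α * arcoth (2 * α * r₁ / k) - u₁) = arcoth (2 * α * r₁ / k) := by
    field_simp
    ring
  rw [cothProfile, this, coth_arcoth hy]
  field_simp

lemma hasDerivAt_cothProfile_of_le {k α μ y u u₁ : ℝ} (hk : k ≠ 0) (hα : 0 < α)
    (hμ : 4 * α ^ 2 = k * μ) (hy : 1 < y) (hu : u ≤ u₁) :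
    HasDerivAt (cothProfile k α (u₁ + 1 / α * arcoth y))
      (-(1 / 2) * (k - μ * cothProfile k α (u₁ + 1 / α * arcoth y) u ^ 2)) u :=
  hasDerivAt_cothProfile hk hα.ne' hμ (cothProfile_anchored_arg_pos hα hy hu).ne'

theorem characteristics_cosmological_region_general
    (Λ K u₁ : ℝ) (hΛ : 0 < Λ) (hK : 1 ≤ K)
    (r r' : ℝ → ℝ)
    (hd : ∀ u ∈ Icc (0:ℝ) u₁, HasDerivWithinAt r (r' u) (Icc 0 u₁) u)
    (hlow : ∀ u ∈ Icc (0:ℝ) u₁, -(1 / 2) * (K - Λ / 3 * r u ^ 2) ≤ r' u)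
    (hhigh : ∀ u ∈ Icc (0:ℝ) u₁, r' u ≤ -(1 / 2) * (1 - Λ * K / 3 * r u ^ 2))
    (hr₁ : Real.sqrt (3 * K / Λ) < r u₁)
    (α cm cp : ℝ)
    (hα : α = (1 / 2) * Real.sqrt (Λ * K / 3))
    (hcm : cm = u₁ + (1 / α) * arcoth (2 * α * r u₁))
    (hcp : cp = u₁ + (1 / α) * arcoth (2 * α * r u₁ / K)) :
    ∀ u ∈ Icc (0:ℝ) u₁,
      (1 / (2 * α)) * coth (α * (cm - u)) ≤ r u ∧
      r u ≤ (K / (2 * α)) * coth (α * (cp - u)) := by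
  have hK0 : 0 < K := by linarith
  have hα0 : 0 < α := by rw [hα]; positivity
  have h4α : 4 * α ^ 2 = Λ * K / 3 := by rw [hα, mul_pow, sq_sqrt (by positivity)]; ring
  have hr₁0 : 0 < r u₁ := (sqrt_nonneg _).trans_lt hr₁
  have hsq : 3 * K < r u₁ ^ 2 * Λ := by rw [← div_lt_iff₀ hΛ]; exact (sqrt_lt' hr₁0).1 hr₁
  have hKr : K < 2 * α * r u₁ := lt_of_pow_lt_pow_left₀ 2 (by positivity) (by nlinarith)
  have hy₁ : 1 < 2 * α * r u₁ / 1 := by rw [div_one]; linarith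
  have hyK : 1 < 2 * α * r u₁ / K := (one_lt_div hK0).2 hKr
  rw [← div_one (2 * α * r u₁)] at hcm
  subst hcm hcp
  intro u hu
  constructor
  · exact le_of_deriv_le_riccati hd
      (fun v hv ↦ (hasDerivAt_cothProfile_of_le one_ne_zero hα0 (by rw [h4α, one_mul]) hy₁
        hv.2).hasDerivWithinAt) hhigh
      (cothProfile_anchored_self one_ne_zero hα0.ne' hy₁).le u hu
  · exact le_of_le_deriv_riccati hd
      (fun v hv ↦ (hasDerivAt_cothProfile_of_le hK0.ne' hα0 (by rw [h4α]; ring) hyK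
        hv.2).hasDerivWithinAt) hlow (cothProfile_anchored_self hK0.ne' hα0.ne' hyK).ge u hu

/-- Bounds for characteristics in the cosmological region `r₁ > r_c⁺`:
a differentiable `r` with `−(1/2)(K − (Λ/3)r²) ≤ r' ≤ −(1/2)(1 − (ΛK/3)r²)` on `[0,u₁]`
and `r(u₁) = r₁ > r_c⁺ = √(3K/Λ) = K/(2α)` is sandwiched between explicit coth profiles,
with `α = (1/2)√(ΛK/3)`, `c⁻ = u₁ + arcoth(2αr₁)/α`, `c⁺ = u₁ + arcoth(2αr₁/K)/α`. -/
theorem characteristics_cosmological_region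
    (Λ K u₁ : ℝ) (hΛ : 0 < Λ) (hK : 1 ≤ K) (hu : 0 < u₁)
    (r r' : ℝ → ℝ)
    (hd : ∀ u ∈ Icc (0:ℝ) u₁, HasDerivWithinAt r (r' u) (Icc 0 u₁) u)
    (hlow : ∀ u ∈ Icc (0:ℝ) u₁, -(1 / 2) * (K - Λ / 3 * r u ^ 2) ≤ r' u)
    (hhigh : ∀ u ∈ Icc (0:ℝ) u₁, r' u ≤ -(1 / 2) * (1 - Λ * K / 3 * r u ^ 2))
    (hr₁ : Real.sqrt (3 * K / Λ) < r u₁)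
    (α cm cp : ℝ)
    (hα : α = (1 / 2) * Real.sqrt (Λ * K / 3))
    (hcm : cm = u₁ + (1 / α) * arcoth (2 * α * r u₁))
    (hcp : cp = u₁ + (1 / α) * arcoth (2 * α * r u₁ / K)) :
    ∀ u ∈ Icc (0:ℝ) u₁,
      (1 / (2 * α)) * coth (α * (cm - u)) ≤ r u ∧
      r u ≤ (K / (2 * α)) * coth (α * (cp - u)) :=
  characteristics_cosmological_region_general Λ K u₁ hΛ hK r r' hd hlow hhigh hr₁ α cm cp hα hcm hcp
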